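/- arXiv:math/0512065 — 4 statements merged into one kernel-verified Lean document; each statement's English description precedes it below -/
import Mathlib

section
/- In the hyperboloid model of H³, let L be a geodesic through x₀ = (1,0,0,0) with planes P, P⁺ = φ(t)P, P⁻ = φ(−t)P orthogonal to L (φ(r) the Minkowski boost in the (1,2)-plane). There exists t₀ such that for t > t₀, any geodesic M intersecting both P⁻ and P⁺ intersects P, and cosh(d(M ∩ P, x₀)) < 1 + 4e^{−2t}. Equivalently, cosh(d(M∩P, x₀)) ≤ 1/√(1 − 2/cosh²(t)). -/
/-- Minkowski inner product on `ℝ^{1,3}`. -/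
def mink (x y : Fin 4 → ℝ) : ℝ :=
  -(x 0 * y 0) + x 1 * y 1 + x 2 * y 2 + x 3 * y 3

/-- The Minkowski boost `φ(r)` in the `(1,2)`-coordinate plane. -/
noncomputable def boost (r : ℝ) (x : Fin 4 → ℝ) : Fin 4 → ℝ :=
  ![Real.cosh r * x 0 + Real.sinh r * x 1,
    Real.sinh r * x 0 + Real.cosh r * x 1, x 2, x 3]

/-- The base point `x₀ = (1,0,0,0)` of the hyperboloid. -/
def basePt : Fin 4 → ℝ := ![1, 0, 0, 0]

/-!
Write `pᵢ = (aᵢ, 0, vᵢ)`. The weights `1 / (2aᵢ)` cancel the time coordinates of the boosted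
points, so `m = (cosh t, 0, w)` with `w` the average of the Klein-model points `vᵢ / aᵢ`, which lie
in the open unit disc; hence `|w| < 1`. Therefore `-⟨m, m⟩ = cosh² t - |w|²` is at least
`cosh² t - 2` and exceeds `sinh² t`, and the normalised point has
`cosh d = cosh t / √(-⟨m, m⟩) < coth t`, which is below `1 + 4e^{-2t}` as soon as `e^{-2t} < 1/2`.
-/

open Real

lemma mink_vecCons_self (a b c d : ℝ) :
    mink ![a, b, c, d] ![a, b, c, d] = -a ^ 2 + b ^ 2 + c ^ 2 + d ^ 2 := by
  simp only [mink, Matrix.cons_val]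
  ring

lemma neg_mink_smul_vecCons_basePt (s a b c d : ℝ) :
    -mink (s • ![a, b, c, d]) basePt = s * a := by
  simp [mink, basePt]

lemma sq_div_add_sq_div_lt_one_of_mink_self {p : Fin 4 → ℝ} (hp : mink p p = -1)
    (hp0 : 0 < p 0) : (p 1 / p 0) ^ 2 + (p 2 / p 0) ^ 2 + (p 3 / p 0) ^ 2 < 1 := by
  rw [div_pow, div_pow, div_pow, ← add_div, ← add_div, div_lt_one (by positivity)]
  linarith [show mink p p = -p 0 ^ 2 + p 1 ^ 2 + p 2 ^ 2 + p 3 ^ 2 by rw [mink]; ring]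

lemma inv_two_mul_smul_boost {p : Fin 4 → ℝ} (hp0 : p 0 ≠ 0) (hp1 : p 1 = 0) (r : ℝ) :
    (2 * p 0)⁻¹ • boost r p = ![cosh r / 2, sinh r / 2, p 2 / (2 * p 0), p 3 / (2 * p 0)] := by
  ext i
  fin_cases i <;> simp [boost, hp1] <;> field_simp

lemma exists_boost_midpoint_eq {p₁ p₂ : Fin 4 → ℝ}
    (h₁ : mink p₁ p₁ = -1) (h₁0 : 0 < p₁ 0) (h₁1 : p₁ 1 = 0)
    (h₂ : mink p₂ p₂ = -1) (h₂0 : 0 < p₂ 0) (h₂1 : p₂ 1 = 0) (t : ℝ) :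
    ∃ u v : ℝ, u ^ 2 + v ^ 2 < 1 ∧
      (2 * p₁ 0)⁻¹ • boost t p₁ + (2 * p₂ 0)⁻¹ • boost (-t) p₂ = ![cosh t, 0, u, v] := by
  have hk₁ := sq_div_add_sq_div_lt_one_of_mink_self h₁ h₁0
  have hk₂ := sq_div_add_sq_div_lt_one_of_mink_self h₂ h₂0
  rw [h₁1, zero_div] at hk₁
  rw [h₂1, zero_div] at hk₂
  refine ⟨(p₁ 2 / p₁ 0 + p₂ 2 / p₂ 0) / 2, (p₁ 3 / p₁ 0 + p₂ 3 / p₂ 0) / 2, ?_, ?_⟩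
  · nlinarith [sq_nonneg (p₁ 2 / p₁ 0 - p₂ 2 / p₂ 0), sq_nonneg (p₁ 3 / p₁ 0 - p₂ 3 / p₂ 0)]
  · rw [inv_two_mul_smul_boost h₁0.ne' h₁1, inv_two_mul_smul_boost h₂0.ne' h₂1]
    ext i
    fin_cases i <;> simp <;> ring

lemma one_div_sqrt_one_sub_div_sq {c k : ℝ} (hc : 0 < c) (hk : k ≤ c ^ 2) :
    1 / √(1 - k / c ^ 2) = c / √(c ^ 2 - k) := by
  rw [show 1 - k / c ^ 2 = (c ^ 2 - k) / c ^ 2 by field_simp,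
    sqrt_div (by linarith), sqrt_sq hc.le, one_div_div]

lemma div_sqrt_sq_sub_le {c k s : ℝ} (hc : 0 < c) (hk : k < c ^ 2) (hs : s ≤ k) :
    c / √(c ^ 2 - s) ≤ 1 / √(1 - k / c ^ 2) := by
  rw [one_div_sqrt_one_sub_div_sq hc hk.le]
  exact div_le_div_of_nonneg_left hc.le (sqrt_pos.2 (by linarith)) (sqrt_le_sqrt (by linarith))

/-- With `u = e^{-2t}`, `coth t = (1 + u) / (1 - u)`, which is below `1 + 4u` exactly when
`u < 1/2`. -/
lemma cosh_div_sinh_lt {t : ℝ} (ht : 2 * exp (-2 * t) < 1) :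
    cosh t / sinh t < 1 + 4 * exp (-2 * t) := by
  set u := exp (-2 * t)
  have hu : 0 < u := exp_pos _
  have hsplit : exp (-t) = exp t * u := by rw [← exp_add]; ring_nf
  have hsinh : sinh t = exp t * (1 - u) / 2 := by rw [sinh_eq, hsplit]; ring
  have hcosh : cosh t = exp t * (1 + u) / 2 := by rw [cosh_eq, hsplit]; ring
  rw [hsinh, hcosh, div_lt_iff₀ (by have := exp_pos t; nlinarith)]
  nlinarith [exp_pos t, mul_pos (exp_pos t) hu]

lemma cosh_div_sqrt_sq_sub_lt {t s : ℝ} (ht : 2 * exp (-2 * t) < 1) (hs : s < 1) :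
    cosh t / √(cosh t ^ 2 - s) < 1 + 4 * exp (-2 * t) := by
  have ht0 : 0 < t := by
    by_contra! h
    linarith [one_le_exp (show 0 ≤ -2 * t by linarith)]
  have hsinh : 0 < sinh t := sinh_pos_iff.2 ht0
  calc cosh t / √(cosh t ^ 2 - s) < cosh t / sinh t := by
        refine div_lt_div_of_pos_left (cosh_pos t) hsinh ((lt_sqrt hsinh.le).2 ?_)
        linarith [cosh_sq t]
    _ < 1 + 4 * exp (-2 * t) := cosh_div_sinh_lt ht

/-- In the hyperboloid model of `ℍ³`, with planes `P` (through
`x₀ = (1,0,0,0)`, second coordinate `= 0`), `P⁺ = φ(t)P`, `P⁻ = φ(−t)P` orthogonal to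
the geodesic `L` through `x₀`: there is `t₀` such that for `t > t₀`, any geodesic `M`
meeting `P⁺` in `φ(t)p₁` and `P⁻` in `φ(−t)p₂` (with `p₁, p₂ ∈ P` on the hyperboloid)
meets `P` in the normalization `q` of `m = (2a₁)⁻¹ φ(t)p₁ + (2a₂)⁻¹ φ(−t)p₂`, which
indeed lies in `P` and is timelike, and
`cosh d(M ∩ P, x₀) = −⟨q, x₀⟩ ≤ 1/√(1 − 2/cosh² t) < 1 + 4 e^{−2t}`. -/
theorem geodesic_meets_middle_plane_close_to_center :
    ∃ t₀ : ℝ, ∀ t : ℝ, t₀ < t → ∀ p₁ p₂ : Fin 4 → ℝ,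
      mink p₁ p₁ = -1 → 0 < p₁ 0 → p₁ 1 = 0 →
      mink p₂ p₂ = -1 → 0 < p₂ 0 → p₂ 1 = 0 →
      ∀ m : Fin 4 → ℝ,
        m = (2 * p₁ 0)⁻¹ • boost t p₁ + (2 * p₂ 0)⁻¹ • boost (-t) p₂ →
        m 1 = 0 ∧ mink m m < 0 ∧
        -(mink ((Real.sqrt (-(mink m m)))⁻¹ • m) basePt)
            ≤ 1 / Real.sqrt (1 - 2 / Real.cosh t ^ 2) ∧
        -(mink ((Real.sqrt (-(mink m m)))⁻¹ • m) basePt)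
            < 1 + 4 * Real.exp (-2 * t) := by
  refine ⟨1, fun t ht p₁ p₂ h₁ h₁0 h₁1 h₂ h₂0 h₂1 m hm => ?_⟩
  obtain ⟨u, v, huv, rfl⟩ := hm ▸ exists_boost_midpoint_eq h₁ h₁0 h₁1 h₂ h₂0 h₂1 t
  have hcosh : 2 < cosh t ^ 2 := by
    nlinarith [cosh_sq t, self_lt_sinh_iff.2 (zero_lt_one.trans ht)]
  have hexp : 2 * exp (-2 * t) < 1 := by
    have := add_one_lt_exp (show 2 * t ≠ 0 by positivity)
    rw [neg_mul, exp_neg, ← div_eq_mul_inv, div_lt_one (exp_pos _)]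
    linarith
  have hmm : -mink ![cosh t, 0, u, v] ![cosh t, 0, u, v] = cosh t ^ 2 - (u ^ 2 + v ^ 2) := by
    rw [mink_vecCons_self]; ring
  rw [neg_mink_smul_vecCons_basePt, hmm, inv_mul_eq_div]
  refine ⟨rfl, by linarith, ?_, cosh_div_sqrt_sq_sub_lt hexp huv⟩
  exact div_sqrt_sq_sub_le (cosh_pos t) hcosh (by linarith)
end

section
/- Let ABC be a hyperbolic triangle with cosh(AB) ≤ 2. If sinh(AC)·sinh(BC) ≥ (1/4)e^{ρ/2N}, then the angle γ at C satisfies cos(γ) ≥ 1 − 8e^{−ρ/2N}. -/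
/-- For a hyperbolic triangle `ABC` with `cosh(AB) ≤ 2` and
`sinh(AC)·sinh(BC) ≥ (1/4)·e^{ρ/(2N)}`, the angle `γ` at `C` (given by the hyperbolic
law of cosines) satisfies `cos γ ≥ 1 − 8 e^{−ρ/(2N)}`. -/
theorem hyperbolic_triangle_angle_estimate
    (AB AC BC γ ρ N : ℝ) (hAC : 0 < AC) (hBC : 0 < BC) (hN : 0 < N)
    (hlaw : Real.cos γ =
      (-Real.cosh AB + Real.cosh AC * Real.cosh BC) / (Real.sinh AC * Real.sinh BC))
    (hAB : Real.cosh AB ≤ 2)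
    (hbig : (1 / 4) * Real.exp (ρ / (2 * N)) ≤ Real.sinh AC * Real.sinh BC) :
    1 - 8 * Real.exp (-ρ / (2 * N)) ≤ Real.cos γ := by
  set s := Real.sinh AC * Real.sinh BC with hs
  have hspos : 0 < s := mul_pos ((Real.sinh_pos_iff.mpr hAC)) (Real.sinh_pos_iff.mpr hBC)
  have hcc : 1 + s ≤ Real.cosh AC * Real.cosh BC := by
    have := Real.cosh_sub AC BC
    nlinarith [Real.one_le_cosh (AC - BC)]
  have h1 : 1 - 1 / s ≤ Real.cos γ := by
    rw [hlaw, le_div_iff₀ hspos]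
    nlinarith [one_div_mul_cancel (ne_of_gt hspos)]
  have hexp : 0 < Real.exp (ρ / (2 * N)) := Real.exp_pos _
  have hinv : 1 / s ≤ 4 * Real.exp (-ρ / (2 * N)) := by
    rw [div_le_iff₀ hspos]
    have : Real.exp (-ρ / (2 * N)) * Real.exp (ρ / (2 * N)) = 1 := by
      rw [← Real.exp_add]; ring_nf; exact Real.exp_zero
    nlinarith [Real.exp_pos (-ρ / (2 * N))]
  nlinarith [Real.exp_pos (-ρ / (2 * N))]
end

section
/- Let T be a geodesic n-simplex in H^n and B a ball intersecting every facet of T. Let P be a hyperplane disjoint from B. Then at least 2 vertices of T lie on the same (closed) side of P as B. -/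
/-- Minkowski inner product on `ℝ^{1,n}`. -/
def minkS (n : ℕ) (x y : Fin (n + 1) → ℝ) : ℝ :=
  -(x 0 * y 0) + ∑ i : Fin n, x i.succ * y i.succ

/-- Membership in the hyperboloid model of `ℍⁿ`. -/
def onHyp (n : ℕ) (x : Fin (n + 1) → ℝ) : Prop :=
  minkS n x x = -1 ∧ 0 < x 0

/-- The facet of the geodesic simplex with vertices `v` opposite vertex `v i`
(hyperbolic convex hull of the other vertices, in the hyperboloid model). -/
def hFacet (n : ℕ) (v : Fin (n + 1) → (Fin (n + 1) → ℝ)) (i : Fin (n + 1)) :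
    Set (Fin (n + 1) → ℝ) :=
  {y | ∃ c : Fin (n + 1) → ℝ, (∀ j, 0 ≤ c j) ∧ c i = 0 ∧ (∃ j, c j ≠ 0) ∧
    minkS n (∑ j, c j • v j) (∑ j, c j • v j) < 0 ∧
    y = (Real.sqrt (-(minkS n (∑ j, c j • v j) (∑ j, c j • v j))))⁻¹ •
          ∑ j, c j • v j}

lemma minkS_comm (n : ℕ) (x y : Fin (n+1) → ℝ) : minkS n x y = minkS n y x := by
  simp [minkS, mul_comm]

lemma minkS_smul_left (n : ℕ) (a : ℝ) (x y : Fin (n+1) → ℝ) :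
    minkS n (a • x) y = a * minkS n x y := by
  simp only [minkS, Pi.smul_apply, smul_eq_mul, mul_add, Finset.mul_sum]
  ring_nf

lemma minkS_add_left (n : ℕ) (x x' y : Fin (n+1) → ℝ) :
    minkS n (x + x') y = minkS n x y + minkS n x' y := by
  simp only [minkS, Pi.add_apply, add_mul, Finset.sum_add_distrib]
  ring

lemma minkS_zero_left (n : ℕ) (y : Fin (n+1) → ℝ) : minkS n 0 y = 0 := by
  simp [minkS]

lemma minkS_sum_left {ι : Type*} (n : ℕ) (s : Finset ι) (f : ι → (Fin (n+1) → ℝ))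
    (y : Fin (n+1) → ℝ) :
    minkS n (∑ j ∈ s, f j) y = ∑ j ∈ s, minkS n (f j) y := by
  induction s using Finset.cons_induction with
  | empty => simp [minkS_zero_left]
  | cons a s ha ih => rw [Finset.sum_cons, minkS_add_left, ih, Finset.sum_cons]

lemma minkS_le_neg_one (n : ℕ) (x y : Fin (n+1) → ℝ)
    (hx : onHyp n x) (hy : onHyp n y) : minkS n x y ≤ -1 := by
  obtain ⟨hx1, hx0⟩ := hx
  obtain ⟨hy1, hy0⟩ := hy
  have ha : 0 ≤ ∑ i : Fin n, x i.succ * x i.succ :=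
    Finset.sum_nonneg fun i _ => mul_self_nonneg _
  have hb : 0 ≤ ∑ i : Fin n, y i.succ * y i.succ :=
    Finset.sum_nonneg fun i _ => mul_self_nonneg _
  have hS : (∑ i : Fin n, x i.succ * y i.succ) ^ 2 ≤
      (∑ i : Fin n, x i.succ * x i.succ) * ∑ i : Fin n, y i.succ * y i.succ := by
    have := Finset.sum_mul_sq_le_sq_mul_sq Finset.univ
      (fun i : Fin n => x i.succ) (fun i : Fin n => y i.succ)
    simpa [sq] using this
  set a := ∑ i : Fin n, x i.succ * x i.succ
  set b := ∑ i : Fin n, y i.succ * y i.succ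
  set S := ∑ i : Fin n, x i.succ * y i.succ
  have hxa : x 0 * x 0 = 1 + a := by
    have : -(x 0 * x 0) + a = -1 := hx1
    linarith
  have hyb : y 0 * y 0 = 1 + b := by
    have : -(y 0 * y 0) + b = -1 := hy1
    linarith
  have hgoal : S + 1 ≤ x 0 * y 0 := by
    rcases le_or_gt (S + 1) 0 with h | h
    · nlinarith [mul_pos hx0 hy0]
    · have hab : 2 * S ≤ a + b := by
        rcases le_or_gt S 0 with hs | hs
        · linarith
        · nlinarith [sq_nonneg (a - b)]
      have h2 : (S + 1)^2 ≤ (x 0 * y 0)^2 := by nlinarith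
      nlinarith [mul_pos hx0 hy0]
  show -(x 0 * y 0) + S ≤ -1
  linarith

/-- Let `T` be a geodesic `n`-simplex in `ℍⁿ` (vertices `v`, in general
position), and `B` the closed ball of radius `r` about `c` meeting every facet of `T`.
Let `P` be a hyperplane (unit spacelike normal `u`) disjoint from `B`.  Then at least
`2` vertices of `T` lie on the same closed side of `P` as `B` (the side of `B` being
the sign of `⟨u, c⟩`). -/
theorem two_vertices_on_ball_side
    (n : ℕ) (v : Fin (n + 1) → (Fin (n + 1) → ℝ))
    (hv : ∀ i, onHyp n (v i)) (hgen : LinearIndependent ℝ v)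
    (c : Fin (n + 1) → ℝ) (hc : onHyp n c) (r : ℝ) (hr : 0 ≤ r)
    (hmeets : ∀ i, ∃ y ∈ hFacet n v i, -(minkS n c y) ≤ Real.cosh r)
    (u : Fin (n + 1) → ℝ) (hu : minkS n u u = 1)
    (hdisj : ∀ y, onHyp n y → -(minkS n c y) ≤ Real.cosh r → minkS n u y ≠ 0) :
    ∃ i j : Fin (n + 1), i ≠ j ∧
      0 ≤ minkS n u (v i) * minkS n u c ∧ 0 ≤ minkS n u (v j) * minkS n u c := by
  by_contra hcon
  push_neg at hcon
  have hcosh : (1 : ℝ) ≤ Real.cosh r := Real.one_le_cosh r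
  have hcB : -(minkS n c c) ≤ Real.cosh r := by rw [hc.1]; simpa using hcosh
  have hpc : minkS n u c ≠ 0 := hdisj c hc hcB
  -- find i such that all other vertices are strictly on the far side
  obtain ⟨i, hi⟩ : ∃ i : Fin (n+1), ∀ j, j ≠ i → minkS n u (v j) * minkS n u c < 0 := by
    by_cases hall : ∀ j, minkS n u (v j) * minkS n u c < 0
    · exact ⟨0, fun j _ => hall j⟩
    · push_neg at hall
      obtain ⟨i, hi⟩ := hall
      exact ⟨i, fun j hj => hcon i j (Ne.symm hj) hi⟩
  obtain ⟨y, ⟨cc, hcc0, hcci, ⟨j0, hj0⟩, hnegw, hy⟩, hyB⟩ := hmeets i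
  set w' : Fin (n+1) → ℝ := ∑ j, cc j • v j with hw'
  set s' : ℝ := Real.sqrt (-(minkS n w' w')) with hs'
  have hs'pos : 0 < s' := Real.sqrt_pos.mpr (by linarith)
  have hs'sq : s' * s' = -(minkS n w' w') := Real.mul_self_sqrt (by linarith)
  have hw'0 : 0 < w' 0 := by
    have happ : w' 0 = ∑ j, cc j * v j 0 := by
      rw [hw', Finset.sum_apply]
      exact Finset.sum_congr rfl fun j _ => rfl
    rw [happ]
    refine Finset.sum_pos' (fun j _ => mul_nonneg (hcc0 j) (hv j).2.le) ?_
    exact ⟨j0, Finset.mem_univ _, mul_pos ((hcc0 j0).lt_of_ne (Ne.symm hj0)) (hv j0).2⟩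
  have hyOn : onHyp n y := by
    constructor
    · have hne : s' ≠ 0 := hs'pos.ne'
      rw [hy, minkS_smul_left, minkS_comm, minkS_smul_left,
        show minkS n w' w' = -(s' * s') from by linarith]
      field_simp
    · rw [hy]
      simpa using mul_pos (inv_pos.mpr hs'pos) hw'0
  have hqy : minkS n u y ≠ 0 := hdisj y hyOn hyB
  have hcy : minkS n c y ≤ -1 := minkS_le_neg_one n c y hc hyOn
  -- sign of ⟨u,y⟩ is opposite to ⟨u,c⟩
  have hyc_sign : minkS n u y * minkS n u c < 0 := by
    have huw' : minkS n u w' = ∑ j, cc j * minkS n u (v j) := by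
      rw [minkS_comm, hw', minkS_sum_left]
      exact Finset.sum_congr rfl fun j _ => by rw [minkS_smul_left, minkS_comm]
    have huy : minkS n u y = s'⁻¹ * minkS n u w' := by
      rw [hy, minkS_comm, minkS_smul_left, minkS_comm]
    have hle : minkS n u w' * minkS n u c ≤ 0 := by
      rw [huw', Finset.sum_mul]
      refine Finset.sum_nonpos fun j _ => ?_
      rcases eq_or_ne j i with rfl | hj
      · simp [hcci]
      · rw [mul_assoc]
        exact mul_nonpos_of_nonneg_of_nonpos (hcc0 j) (hi j hj).le
    have : minkS n u y * minkS n u c ≤ 0 := by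
      rw [huy, mul_assoc]
      exact mul_nonpos_of_nonneg_of_nonpos (inv_pos.mpr hs'pos).le hle
    exact this.lt_of_ne (mul_ne_zero hqy hpc)
  -- find t ∈ (0,1) with t ⟨u,c⟩ + (1-t) ⟨u,y⟩ = 0
  set qy := minkS n u y
  set pc := minkS n u c
  obtain ⟨t, ht0, ht1, htz⟩ : ∃ t : ℝ, 0 < t ∧ t < 1 ∧ t * pc + (1 - t) * qy = 0 := by
    rcases mul_neg_iff.mp hyc_sign with ⟨h1, h2⟩ | ⟨h1, h2⟩
    · have hne : qy - pc ≠ 0 := by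
        intro h; rw [sub_eq_zero] at h; rw [h] at h1; linarith
      refine ⟨qy / (qy - pc), div_pos h1 (by linarith), ?_, ?_⟩
      · rw [div_lt_one (by linarith)]; linarith
      · field_simp; ring
    · have hne : qy - pc ≠ 0 := by
        intro h; rw [sub_eq_zero] at h; rw [h] at h1; linarith
      have hkey : qy / (qy - pc) = -qy / (pc - qy) := by
        rw [← neg_div_neg_eq, neg_sub]
      refine ⟨qy / (qy - pc), ?_, ?_, ?_⟩
      · rw [hkey]
        exact div_pos (by linarith) (by linarith)
      · rw [hkey, div_lt_one (by linarith)]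
        linarith
      · field_simp; ring
  set w : Fin (n+1) → ℝ := t • c + (1 - t) • y with hwdef
  have hwexp : ∀ z, minkS n w z = t * minkS n c z + (1 - t) * minkS n y z := by
    intro z
    rw [hwdef, minkS_add_left, minkS_smul_left, minkS_smul_left]
  have hcw : minkS n c w = -t + (1 - t) * minkS n c y := by
    rw [minkS_comm, hwexp, minkS_comm n y c, hc.1]; ring
  have hyw : minkS n y w = t * minkS n c y + (1 - t) * (-1) := by
    rw [minkS_comm, hwexp, hyOn.1]
  have hww : minkS n w w ≤ -1 := by
    have : minkS n w w = t * minkS n c w + (1 - t) * minkS n y w := hwexp w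
    rw [hcw, hyw] at this
    nlinarith [mul_pos ht0 (by linarith : (0:ℝ) < 1 - t)]
  have huw : minkS n u w = 0 := by
    rw [minkS_comm, hwexp, minkS_comm n c u, minkS_comm n y u]
    exact htz
  have hw0 : 0 < w 0 := by
    have hw0e : w 0 = t * c 0 + (1 - t) * y 0 := rfl
    rw [hw0e]
    nlinarith [hc.2, hyOn.2]
  have hcwB : 1 ≤ -(minkS n c w) ∧ -(minkS n c w) ≤ Real.cosh r := by
    rw [hcw]
    constructor <;> nlinarith
  -- normalize w to z on the hyperboloid
  set s : ℝ := Real.sqrt (-(minkS n w w)) with hsdef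
  have hs1 : 1 ≤ s := by
    rw [hsdef]
    rw [show (1:ℝ) = Real.sqrt 1 by simp]
    exact Real.sqrt_le_sqrt (by linarith)
  have hspos : 0 < s := lt_of_lt_of_le one_pos hs1
  have hssq : s * s = -(minkS n w w) := Real.mul_self_sqrt (by linarith)
  set z : Fin (n+1) → ℝ := s⁻¹ • w with hzdef
  have hsne : s ≠ 0 := hspos.ne'
  have hzOn : onHyp n z := by
    constructor
    · rw [hzdef, minkS_smul_left, minkS_comm, minkS_smul_left,
        show minkS n w w = -(s * s) from by linarith]
      field_simp
    · show 0 < s⁻¹ * w 0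
      exact mul_pos (inv_pos.mpr hspos) hw0
  have hzB : -(minkS n c z) ≤ Real.cosh r := by
    have : minkS n c z = s⁻¹ * minkS n c w := by
      rw [hzdef, minkS_comm, minkS_smul_left, minkS_comm]
    rw [this]
    have hsinv : s⁻¹ ≤ 1 := by
      rw [inv_le_one_iff₀]; right; exact hs1
    have h1 := hcwB.1
    have h2 := hcwB.2
    have hsinv0 : 0 < s⁻¹ := inv_pos.mpr hspos
    nlinarith
  have : minkS n u z = 0 := by
    rw [hzdef, minkS_comm, minkS_smul_left, minkS_comm n w u, huw]
    ring
  exact hdisj z hzOn hzB this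
end

section
/- Let G be the angle Gram matrix of a nondegenerate simplex in H^n (G_{ij} = −cos θ_{ij} with θ_{ij} the dihedral angle between facets i and j, G_{ii} = 1), realized as G = SᵗJS for the matrix S of unit spacelike facet normals in Minkowski space (J the Minkowski form). Then the hyperbolic distance between vertices v_i and v_j of the simplex satisfies cosh d(v_i, v_j) = c_{ij} / √(c_{ii} c_{jj}), where c_{ij} is the (i,j) cofactor of G. -/
lemma minkS_eq (n : ℕ) (x y : Fin (n+1) → ℝ) :
    minkS n x y = ∑ k : Fin (n+1), (if k = 0 then (-1:ℝ) else 1) * x k * y k := by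
  rw [Fin.sum_univ_succ]
  simp [minkS, Fin.succ_ne_zero]

lemma minkS_sum_smul_left (n : ℕ) (a : Fin (n+1) → ℝ) (f : Fin (n+1) → Fin (n+1) → ℝ)
    (y : Fin (n+1) → ℝ) :
    minkS n (∑ m, a m • f m) y = ∑ m, a m * minkS n (f m) y := by
  simp only [minkS_eq, Finset.mul_sum]
  rw [Finset.sum_comm]
  refine Finset.sum_congr rfl fun k _ => ?_
  simp only [Finset.sum_apply, Pi.smul_apply, smul_eq_mul, Finset.sum_mul, Finset.mul_sum]
  exact Finset.sum_congr rfl fun m _ => by ring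

/-- Let `u 0, …, u n` be the unit spacelike outward normals of the facets
of a nondegenerate compact simplex in `ℍⁿ` (hyperboloid model), with vertices
`v 0, …, v n` on the hyperboloid, vertex `i` lying on every facet `j ≠ i` and strictly
on the inner side of its opposite facet (`⟨u i, v i⟩ < 0`).  Let `G` be the angle Gram
matrix, `G i j = ⟨u i, u j⟩ = −cos θ_{ij}`, `G i i = 1`.  Then the hyperbolic distance
between the vertices satisfies `cosh d(v i, v j) = −⟨v i, v j⟩ = c_{ij}/√(c_{ii}c_{jj})`
where `c_{ij} = (adjugate G) j i` is the `(i,j)` cofactor of `G`. -/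
theorem cosh_dist_eq_cofactor_ratio
    (n : ℕ) (u v : Fin (n + 1) → (Fin (n + 1) → ℝ))
    (hu : ∀ i, minkS n (u i) (u i) = 1)
    (hgen : LinearIndependent ℝ u)
    (hv : ∀ i, minkS n (v i) (v i) = -1 ∧ 0 < v i 0)
    (hinc : ∀ i j, i ≠ j → minkS n (u j) (v i) = 0)
    (hout : ∀ i, minkS n (u i) (v i) < 0)
    (G : Matrix (Fin (n + 1)) (Fin (n + 1)) ℝ)
    (hG : ∀ i j, G i j = minkS n (u i) (u j)) :
    ∀ i j, -(minkS n (v i) (v j)) =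
      G.adjugate j i / Real.sqrt (G.adjugate i i * G.adjugate j j) := by
  classical
  set M : Matrix (Fin (n+1)) (Fin (n+1)) ℝ := Matrix.of u with hM
  have hMunit : IsUnit M := Matrix.linearIndependent_rows_iff_isUnit.mp hgen
  have hMdet : M.det ≠ 0 := by
    have := (Matrix.isUnit_iff_isUnit_det M).mp hMunit
    exact this.ne_zero
  set θ : Fin (n+1) → ℝ := fun k => if k = 0 then -1 else 1 with hθ
  have hGfac : G = M * Matrix.diagonal θ * M.transpose := by
    ext i j
    rw [hG, minkS_eq, Matrix.mul_apply]
    refine Finset.sum_congr rfl fun k _ => ?_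
    rw [Matrix.mul_diagonal, Matrix.transpose_apply]
    simp [hM, hθ]
  have hprod : ∏ k : Fin (n+1), θ k = -1 := by
    rw [Fin.prod_univ_succ]
    simp [hθ, Fin.succ_ne_zero]
  have hdet : G.det = -(M.det ^ 2) := by
    rw [hGfac, Matrix.det_mul, Matrix.det_mul, Matrix.det_transpose,
      Matrix.det_diagonal, hprod]
    ring
  have hdetneg : G.det < 0 := by
    rw [hdet]
    have : 0 < M.det ^ 2 := by positivity
    linarith
  have hGdet : IsUnit G.det := isUnit_iff_ne_zero.mpr (ne_of_lt hdetneg)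
  have hGsymm : ∀ k m, G k m = G m k := fun k m => by
    rw [hG, hG, minkS_comm]
  have hcard : Fintype.card (Fin (n+1)) = Module.finrank ℝ (Fin (n+1) → ℝ) := by simp
  let B := basisOfLinearIndependentOfCardEqFinrank hgen hcard
  have hB : ∀ m, B m = u m := fun m => by
    rw [coe_basisOfLinearIndependentOfCardEqFinrank]
  set d : Fin (n+1) → ℝ := fun i => minkS n (u i) (v i) with hd
  have hdne : ∀ i, d i ≠ 0 := fun i => ne_of_lt (hout i)
  set a : Fin (n+1) → Fin (n+1) → ℝ := fun i m => B.repr (v i) m with ha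
  have hva : ∀ i, v i = ∑ m, a i m • u m := by
    intro i
    conv_lhs => rw [← B.sum_repr (v i)]
    exact Finset.sum_congr rfl fun m _ => by rw [hB]
  have hGa : ∀ i, G.mulVec (a i) = fun k => if k = i then d i else 0 := by
    intro i
    funext k
    have h1 : minkS n (u k) (v i) = ∑ m, a i m * G k m := by
      rw [minkS_comm, hva i, minkS_sum_smul_left]
      exact Finset.sum_congr rfl fun m _ => by rw [hGsymm k m, hG, minkS_comm]
    have h2 : G.mulVec (a i) k = minkS n (u k) (v i) := by
      rw [h1, Matrix.mulVec, dotProduct]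
      exact Finset.sum_congr rfl fun m _ => by ring
    rw [h2]
    by_cases hk : k = i
    · subst hk; simp [hd]
    · simp [hk]
      exact hinc i k (fun h => hk h.symm)
  have hainv : ∀ i, a i = G⁻¹.mulVec (fun k => if k = i then d i else 0) := by
    intro i
    rw [← hGa i, Matrix.mulVec_mulVec, Matrix.nonsing_inv_mul G hGdet, Matrix.one_mulVec]
  have haij : ∀ i j, a i j = G⁻¹ j i * d i := by
    intro i j
    rw [hainv i]
    simp [Matrix.mulVec, dotProduct, mul_ite]
  have hGinv : ∀ i j, G⁻¹ j i = G.adjugate j i / G.det := by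
    intro i j
    rw [Matrix.inv_def, Ring.inverse_eq_inv]
    simp [div_eq_inv_mul]
  have key : ∀ i j, minkS n (v i) (v j) = d i * d j * (G.adjugate j i / G.det) := by
    intro i j
    rw [hva i, minkS_sum_smul_left]
    have : ∀ m, m ≠ j → a i m * minkS n (u m) (v j) = 0 := by
      intro m hm
      rw [hinc j m (fun h => hm h.symm), mul_zero]
    rw [Finset.sum_eq_single j (fun m _ hm => this m hm) (by simp)]
    rw [haij i j, hGinv]
    ring
  have hdiag : ∀ i, G.adjugate i i = -G.det / d i ^ 2 := by
    intro i
    have h := key i i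
    rw [(hv i).1] at h
    have hdet0 : G.det ≠ 0 := ne_of_lt hdetneg
    have hdi := hdne i
    rw [eq_div_iff (pow_two_pos_of_ne_zero hdi).ne']
    field_simp at h
    nlinarith [h]
  intro i j
  have hadjpos : ∀ i, 0 < G.adjugate i i := by
    intro i
    rw [hdiag i]
    have : 0 < d i ^ 2 := pow_two_pos_of_ne_zero (hdne i)
    apply div_pos (by linarith) this
  have hdet0 : G.det ≠ 0 := ne_of_lt hdetneg
  have hdi := hdne i
  have hdj := hdne j
  have hsq : G.adjugate i i * G.adjugate j j = (G.det / (d i * d j)) ^ 2 := by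
    rw [hdiag i, hdiag j]
    field_simp
  have hsqrt : Real.sqrt (G.adjugate i i * G.adjugate j j) = -G.det / (d i * d j) := by
    rw [hsq, Real.sqrt_sq_eq_abs, abs_div, abs_of_neg hdetneg,
      abs_of_pos (mul_pos_of_neg_of_neg (hout i) (hout j))]
  have hdd : d i * d j ≠ 0 := mul_ne_zero hdi hdj
  have hne : -G.det / (d i * d j) ≠ 0 := div_ne_zero (by linarith) hdd
  rw [key i j, hsqrt, eq_div_iff hne]
  field_simp
end
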